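/- For any orthonormal vectors v₁, v₂, v₃, v₄ in ℝ⁷, one has |ψ(v₁, v₂, v₃, v₄)| ≤ 1. (That is, the 4-form ψ = ∗φ is a calibration on ℝ⁷; its calibrated 4-planes are the coassociative planes.) -/

import Mathlib

/-!
`ψ(x, y, z, w)` is linear in `x`, so it equals `⟪x, χ(y, z, w)⟫` for a vector-valued 3-form `χ`
(the triple cross product of `ℝ⁷`). Harvey–Lawson's associator equality
`‖χ(y, z, w)‖² + φ(y, z, w)² = ‖y ∧ z ∧ w‖²` identifies the right-hand side with the Gram
determinant of `y, z, w`, which is `1` for an orthonormal triple. Hence `‖χ‖ ≤ 1`, and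
Cauchy–Schwarz gives `|ψ| ≤ ‖x‖ ‖χ‖ ≤ 1`.
-/

noncomputable section

open scoped InnerProductSpace

/-- `3 × 3` determinant of coordinates `a, b, c` of `(x, y, z)`. -/
def det3 (a b c : Fin 7) (x y z : EuclideanSpace ℝ (Fin 7)) : ℝ :=
  x a * (y b * z c - y c * z b) - x b * (y a * z c - y c * z a) +
    x c * (y a * z b - y b * z a)

/-- The coefficient of `dx_a ∧ dx_b ∧ dx_c ∧ dx_d` evaluated on `(x, y, z, w)`:
a `4 × 4` determinant of the corresponding coordinates. -/
def det4 (a b c d : Fin 7) (x y z w : EuclideanSpace ℝ (Fin 7)) : ℝ :=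
  x a * det3 b c d y z w - x b * det3 a c d y z w +
    x c * det3 a b d y z w - x d * det3 a b c y z w

/-- The coassociative calibration `ψ = ∗φ` on `ℝ⁷` (indices `0,…,6`
corresponding to `x_1,…,x_7`):
`ψ = dx₁∧dx₂∧dx₃∧dx₄ − (dx₁∧dx₂ + dx₃∧dx₄)∧dx₆∧dx₇
   − (dx₁∧dx₃ + dx₄∧dx₂)∧dx₇∧dx₅ − (dx₁∧dx₄ + dx₂∧dx₃)∧dx₅∧dx₆`. -/
def psi (x y z w : EuclideanSpace ℝ (Fin 7)) : ℝ :=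
  det4 0 1 2 3 x y z w - det4 0 1 5 6 x y z w - det4 2 3 5 6 x y z w -
    det4 0 2 6 4 x y z w - det4 3 1 6 4 x y z w - det4 0 3 4 5 x y z w -
    det4 1 2 4 5 x y z w

open Matrix

local notation "ℝ⁷" => EuclideanSpace ℝ (Fin 7)

/-- Entry `i` is the cofactor of `x i` in `psi x y z w`. -/
def tripleCross (y z w : ℝ⁷) : ℝ⁷ :=
  !₂[det3 1 2 3 y z w - det3 1 5 6 y z w - det3 2 6 4 y z w - det3 3 4 5 y z w,
    -det3 0 2 3 y z w + det3 0 5 6 y z w + det3 3 6 4 y z w - det3 2 4 5 y z w,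
    det3 0 1 3 y z w - det3 3 5 6 y z w + det3 0 6 4 y z w + det3 1 4 5 y z w,
    -det3 0 1 2 y z w + det3 2 5 6 y z w - det3 1 6 4 y z w + det3 0 4 5 y z w,
    det3 0 2 6 y z w + det3 3 1 6 y z w - det3 0 3 5 y z w - det3 1 2 5 y z w,
    -det3 0 1 6 y z w - det3 2 3 6 y z w + det3 0 3 4 y z w + det3 1 2 4 y z w,
    det3 0 1 5 y z w + det3 2 3 5 y z w - det3 0 2 4 y z w - det3 3 1 4 y z w]

/-- The associative calibration `φ`, indexed like `psi`. -/
def phi (x y z : ℝ⁷) : ℝ :=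
  det3 4 5 6 x y z - det3 4 0 1 x y z - det3 4 2 3 x y z - det3 5 0 2 x y z -
    det3 5 3 1 x y z - det3 6 0 3 x y z - det3 6 1 2 x y z

theorem psi_eq_inner_tripleCross (x y z w : ℝ⁷) :
    psi x y z w = ⟪x, tripleCross y z w⟫_ℝ := by
  simp only [psi, det4, det3, tripleCross, PiLp.inner_apply, RCLike.inner_apply, conj_trivial,
    Fin.sum_univ_seven, cons_val_zero, cons_val_one, cons_val]
  ring

theorem norm_tripleCross_sq_add_phi_sq (u : Fin 3 → ℝ⁷) :
    ‖tripleCross (u 0) (u 1) (u 2)‖ ^ 2 + phi (u 0) (u 1) (u 2) ^ 2 = (gram ℝ u).det := by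
  simp only [det_fin_three, gram_apply, EuclideanSpace.norm_sq_eq, PiLp.inner_apply,
    RCLike.inner_apply, conj_trivial, Fin.sum_univ_seven, tripleCross, phi, det3, cons_val_zero,
    cons_val_one, cons_val, Real.norm_eq_abs, sq_abs]
  ring

theorem norm_tripleCross_le_one {u : Fin 3 → ℝ⁷} (hu : Orthonormal ℝ u) :
    ‖tripleCross (u 0) (u 1) (u 2)‖ ≤ 1 := by
  have h := norm_tripleCross_sq_add_phi_sq u
  rw [gram_eq_one_iff_orthonormal.mpr hu, det_one] at h
  refine (sq_le_one_iff₀ (norm_nonneg _)).mp ?_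
  linarith [sq_nonneg (phi (u 0) (u 1) (u 2))]

/-- The 4-form `ψ = ∗φ` is a calibration: `|ψ(v₁, v₂, v₃, v₄)| ≤ 1` for any
orthonormal vectors `v₁, v₂, v₃, v₄` in `ℝ⁷`. -/
theorem abs_psi_le_one_of_orthonormal (v : Fin 4 → EuclideanSpace ℝ (Fin 7))
    (hv : Orthonormal ℝ v) : |psi (v 0) (v 1) (v 2) (v 3)| ≤ 1 := by
  have hχ := norm_tripleCross_le_one (hv.comp Fin.succ (Fin.succ_injective 3))
  simp only [Function.comp_apply, Fin.reduceSucc] at hχ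
  rw [psi_eq_inner_tripleCross]
  calc |⟪v 0, tripleCross (v 1) (v 2) (v 3)⟫_ℝ|
      ≤ ‖v 0‖ * ‖tripleCross (v 1) (v 2) (v 3)‖ := abs_real_inner_le_norm _ _
    _ ≤ 1 := by rw [hv.1 0, one_mul]; exact hχ
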